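/- arXiv:1703.10283 — 3 statements merged into one kernel-verified Lean document; each statement's English description precedes it below -/
import Mathlib

section
/- Let g : ℝ → [0,∞) be a probability density with g(−s) = g(s) for all s ∈ ℝ. Then d_g(X, −X) = d_g(X, X) and d_g(−X, −X) = d_g(X, X). In particular, if d_g(X,X) > 0 then the distance correlation satisfies R_g(X,−X) = d_g(X,−X)/√(d_g(X,X) d_g(−X,−X)) = 1, even though X and −X need not be equal almost surely; thus R_g(X,Y) = 1 does not imply X = Y a.s. -/
open MeasureTheory
open scoped unitInterval ENNReal

/-! Because `g` is even, the substitution `t ↦ -t` (and `s ↦ -s`) in the inner integrals turns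
the integrand of `d_g(X,-X)` and of `d_g(-X,-X)` into that of `d_g(X,X)`, since
`φ_{X,-Y}(x; s, t) = φ_{X,Y}(x; s, -t)` and `φ_{-X}(x; s) = φ_X(x; -s)`. Characteristic functions
have modulus at most `1`, so the `k`-th term of `d_g(X,X)` is at most `4 e⁻¹ / k!`; hence
`d_g(X,X)` is finite and the correlation is `d_g(X,X) / d_g(X,X) = 1`. -/

/-- The joint characteristic function of the finite-dimensional distribution of the pair
of processes `(X, Y)` at the points `x 0, …, x (k-1)` of `[0,1]`:
`φ_{X,Y}(x; s, t) = E[exp(i Σ_j (s_j X(x_j) + t_j Y(x_j)))]`. -/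
noncomputable def jointCF {Ω : Type*} [MeasurableSpace Ω] (ℙ : Measure Ω)
    (X Y : Ω → C(I, ℝ)) {k : ℕ} (x : Fin k → I) (s t : Fin k → ℝ) : ℂ :=
  ∫ ω, Complex.exp (Complex.I * ((∑ j, (s j * X ω (x j) + t j * Y ω (x j)) : ℝ) : ℂ)) ∂ℙ

/-- The characteristic function of the finite-dimensional distribution of the process `X`
at the points `x 0, …, x (k-1)` of `[0,1]`: `φ_X(x; s) = E[exp(i Σ_j s_j X(x_j))]`. -/
noncomputable def margCF {Ω : Type*} [MeasurableSpace Ω] (ℙ : Measure Ω)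
    (X : Ω → C(I, ℝ)) {k : ℕ} (x : Fin k → I) (s : Fin k → ℝ) : ℂ :=
  ∫ ω, Complex.exp (Complex.I * ((∑ j, s j * X ω (x j) : ℝ) : ℂ)) ∂ℙ

/-- The distance covariance `d_g(X,Y)` of two stochastic processes `X, Y` with continuous
sample paths on `[0,1]`, with weight function `g`:
`d_g(X,Y) = Σ_{k≥1} (e^{-1}/k!) ∫_{[0,1]^k} ∫_{ℝ^{2k}} |φ_{X,Y} - φ_X φ_Y|² Π_j g(s_j)g(t_j) ds dt dx`. -/
noncomputable def distCov {Ω : Type*} [MeasurableSpace Ω] (ℙ : Measure Ω)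
    (X Y : Ω → C(I, ℝ)) (g : ℝ → ℝ) : ℝ≥0∞ :=
  ∑' k : ℕ,
    ENNReal.ofReal (Real.exp (-1) / (Nat.factorial (k + 1) : ℝ)) *
      ∫⁻ (x : Fin (k + 1) → I),
        ∫⁻ (s : Fin (k + 1) → ℝ), ∫⁻ (t : Fin (k + 1) → ℝ),
          ENNReal.ofReal
            (‖jointCF ℙ X Y x s t - margCF ℙ X x s * margCF ℙ Y x t‖ ^ 2 *
              ∏ j, g (s j) * g (t j))

section CharacteristicFunctions

variable {Ω : Type*} [MeasurableSpace Ω] (ℙ : Measure Ω)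

lemma jointCF_neg_left (X Y : Ω → C(I, ℝ)) {k : ℕ} (x : Fin k → I) (s t : Fin k → ℝ) :
    jointCF ℙ (fun ω => -X ω) Y x s t = jointCF ℙ X Y x (-s) t := by
  simp only [jointCF, ContinuousMap.neg_apply, Pi.neg_apply, mul_neg, neg_mul]

lemma jointCF_neg_right (X Y : Ω → C(I, ℝ)) {k : ℕ} (x : Fin k → I) (s t : Fin k → ℝ) :
    jointCF ℙ X (fun ω => -Y ω) x s t = jointCF ℙ X Y x s (-t) := by
  simp only [jointCF, ContinuousMap.neg_apply, Pi.neg_apply, mul_neg, neg_mul]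

lemma margCF_neg (X : Ω → C(I, ℝ)) {k : ℕ} (x : Fin k → I) (s : Fin k → ℝ) :
    margCF ℙ (fun ω => -X ω) x s = margCF ℙ X x (-s) := by
  simp only [margCF, ContinuousMap.neg_apply, Pi.neg_apply, mul_neg, neg_mul]

lemma norm_integral_exp_I_mul_le_one [IsProbabilityMeasure ℙ] (f : Ω → ℝ) :
    ‖∫ ω, Complex.exp (Complex.I * f ω) ∂ℙ‖ ≤ 1 := by
  simpa [mul_comm Complex.I] using
    norm_integral_le_of_norm_le_const (μ := ℙ) (C := 1)
      (ae_of_all _ fun ω => (Complex.norm_exp_ofReal_mul_I (f ω)).le)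

lemma norm_jointCF_sub_margCF_mul_le_two [IsProbabilityMeasure ℙ] (X Y : Ω → C(I, ℝ)) {k : ℕ}
    (x : Fin k → I) (s t : Fin k → ℝ) :
    ‖jointCF ℙ X Y x s t - margCF ℙ X x s * margCF ℙ Y x t‖ ≤ 2 := by
  have hXY : ‖jointCF ℙ X Y x s t‖ ≤ 1 := norm_integral_exp_I_mul_le_one ℙ _
  have hX : ‖margCF ℙ X x s‖ ≤ 1 := norm_integral_exp_I_mul_le_one ℙ _
  have hY : ‖margCF ℙ Y x t‖ ≤ 1 := norm_integral_exp_I_mul_le_one ℙ _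
  calc ‖jointCF ℙ X Y x s t - margCF ℙ X x s * margCF ℙ Y x t‖
      ≤ ‖jointCF ℙ X Y x s t‖ + ‖margCF ℙ X x s‖ * ‖margCF ℙ Y x t‖ := by
        rw [← norm_mul]; exact norm_sub_le _ _
    _ ≤ 1 + 1 * 1 := by gcongr
    _ = 2 := by norm_num

end CharacteristicFunctions

lemma lintegral_ofReal_prod_eq_one {ι : Type*} [Fintype ι] {g : ℝ → ℝ}
    (hg_nonneg : ∀ s, 0 ≤ g s) (hg_int : ∫ s, g s = 1) :
    ∫⁻ t : ι → ℝ, ENNReal.ofReal (∏ j, g (t j)) = 1 := by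
  have hg : Integrable g := by
    by_contra h
    simp [integral_undef h] at hg_int
  have hprod : Integrable fun t : ι → ℝ => ∏ j, g (t j) := by
    rw [volume_pi]; exact Integrable.fintype_prod fun _ => hg
  rw [← ofReal_integral_eq_lintegral_ofReal hprod
    (ae_of_all _ fun t => Finset.prod_nonneg fun j _ => hg_nonneg (t j)),
    integral_fintype_prod_volume_eq_pow, hg_int, one_pow, ENNReal.ofReal_one]

section DistanceCovariance

variable {Ω : Type*} [MeasurableSpace Ω] (ℙ : Measure Ω) {g : ℝ → ℝ}

lemma distCov_neg_left (X Y : Ω → C(I, ℝ)) (hg_symm : ∀ s, g (-s) = g s) :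
    distCov ℙ (fun ω => -X ω) Y g = distCov ℙ X Y g := by
  refine tsum_congr fun k => congrArg _ <| lintegral_congr fun x => ?_
  rw [← lintegral_neg_eq_self]
  refine lintegral_congr fun s => lintegral_congr fun t => ?_
  simp only [jointCF_neg_left, margCF_neg, neg_neg, Pi.neg_apply, hg_symm]

lemma distCov_neg_right (X Y : Ω → C(I, ℝ)) (hg_symm : ∀ s, g (-s) = g s) :
    distCov ℙ X (fun ω => -Y ω) g = distCov ℙ X Y g := by
  refine tsum_congr fun k => congrArg _ <| lintegral_congr fun x => lintegral_congr fun s => ?_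
  rw [← lintegral_neg_eq_self]
  refine lintegral_congr fun t => ?_
  simp only [jointCF_neg_right, margCF_neg, neg_neg, Pi.neg_apply, hg_symm]

lemma lintegral_distCov_integrand_le_four [IsProbabilityMeasure ℙ] (X Y : Ω → C(I, ℝ))
    (hg_nonneg : ∀ s, 0 ≤ g s) (hg_int : ∫ s, g s = 1) (k : ℕ) :
    ∫⁻ x : Fin k → I, ∫⁻ s : Fin k → ℝ, ∫⁻ t : Fin k → ℝ,
      ENNReal.ofReal (‖jointCF ℙ X Y x s t - margCF ℙ X x s * margCF ℙ Y x t‖ ^ 2 *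
        ∏ j, g (s j) * g (t j)) ≤ 4 := by
  have hbound : ∀ (x : Fin k → I) (s t : Fin k → ℝ), ENNReal.ofReal
      (‖jointCF ℙ X Y x s t - margCF ℙ X x s * margCF ℙ Y x t‖ ^ 2 * ∏ j, g (s j) * g (t j)) ≤
      4 * ENNReal.ofReal (∏ j, g (s j)) * ENNReal.ofReal (∏ j, g (t j)) := by
    intro x s t
    have hs : 0 ≤ ∏ j, g (s j) := Finset.prod_nonneg fun j _ => hg_nonneg _
    have ht : 0 ≤ ∏ j, g (t j) := Finset.prod_nonneg fun j _ => hg_nonneg _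
    have hsq : ‖jointCF ℙ X Y x s t - margCF ℙ X x s * margCF ℙ Y x t‖ ^ 2 ≤ 4 :=
      (pow_le_pow_left₀ (norm_nonneg _) (norm_jointCF_sub_margCF_mul_le_two ℙ X Y x s t) 2).trans_eq
        (by norm_num)
    rw [Finset.prod_mul_distrib, ← ENNReal.ofReal_ofNat 4, ← ENNReal.ofReal_mul (by norm_num),
      ← ENNReal.ofReal_mul (mul_nonneg zero_le_four hs), mul_assoc]
    gcongr
  calc _ ≤ ∫⁻ x : Fin k → I, ∫⁻ s : Fin k → ℝ, ∫⁻ t : Fin k → ℝ,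
        4 * ENNReal.ofReal (∏ j, g (s j)) * ENNReal.ofReal (∏ j, g (t j)) := by
        gcongr with x s t
        exact hbound x s t
    _ = 4 := by
        simp_rw [lintegral_const_mul' _ _ (ENNReal.mul_ne_top ENNReal.ofNat_ne_top
          ENNReal.ofReal_ne_top), lintegral_ofReal_prod_eq_one hg_nonneg hg_int, mul_one,
          lintegral_const_mul' _ _ ENNReal.ofNat_ne_top,
          lintegral_ofReal_prod_eq_one hg_nonneg hg_int, lintegral_const,
          measure_univ, mul_one]

lemma distCov_ne_top [IsProbabilityMeasure ℙ] (X Y : Ω → C(I, ℝ))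
    (hg_nonneg : ∀ s, 0 ≤ g s) (hg_int : ∫ s, g s = 1) : distCov ℙ X Y g ≠ ⊤ := by
  have hsum : Summable fun k : ℕ => Real.exp (-1) / (k + 1).factorial := by
    simpa [div_eq_mul_inv] using
      ((summable_nat_add_iff 1).mpr (Real.summable_pow_div_factorial 1)).mul_left (Real.exp (-1))
  refine ne_top_of_le_ne_top ?_ (ENNReal.tsum_le_tsum fun k =>
    mul_le_mul_right (lintegral_distCov_integrand_le_four ℙ X Y hg_nonneg hg_int (k + 1)) _)
  rw [ENNReal.tsum_mul_right, ← ENNReal.ofReal_tsum_of_nonneg (fun k => by positivity) hsum]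
  exact ENNReal.mul_ne_top ENNReal.ofReal_ne_top ENNReal.ofNat_ne_top

end DistanceCovariance

theorem distCov_neg_self_general
    {Ω : Type*} [MeasurableSpace Ω] (ℙ : Measure Ω) [IsProbabilityMeasure ℙ]
    (X : Ω → C(I, ℝ))
    (g : ℝ → ℝ) (hg_nonneg : ∀ s, 0 ≤ g s)
    (hg_int : (∫ s, g s) = 1) (hg_symm : ∀ s, g (-s) = g s) :
    distCov ℙ X (fun ω => -(X ω)) g = distCov ℙ X X g ∧
      distCov ℙ (fun ω => -(X ω)) (fun ω => -(X ω)) g = distCov ℙ X X g ∧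
      (0 < distCov ℙ X X g →
        distCov ℙ X (fun ω => -(X ω)) g /
          (distCov ℙ X X g *
            distCov ℙ (fun ω => -(X ω)) (fun ω => -(X ω)) g) ^ (1/2 : ℝ) = 1) := by
  have hneg : distCov ℙ X (fun ω => -(X ω)) g = distCov ℙ X X g :=
    distCov_neg_right ℙ X X hg_symm
  have hneg_neg : distCov ℙ (fun ω => -(X ω)) (fun ω => -(X ω)) g = distCov ℙ X X g := by
    rw [distCov_neg_left ℙ X _ hg_symm, hneg]
  refine ⟨hneg, hneg_neg, fun hpos => ?_⟩
  have hsqrt : (distCov ℙ X X g * distCov ℙ X X g) ^ (1/2 : ℝ) = distCov ℙ X X g := by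
    rw [← sq, ← ENNReal.rpow_natCast, ← ENNReal.rpow_mul]
    norm_num
  rw [hneg, hneg_neg, hsqrt]
  exact ENNReal.div_self hpos.ne' (distCov_ne_top ℙ X X hg_nonneg hg_int)

/-- For a symmetric probability density `g` on `ℝ`,
`d_g(X,−X) = d_g(X,X)` and `d_g(−X,−X) = d_g(X,X)`; in particular, if `d_g(X,X) > 0`
then the distance correlation `R_g(X,−X) = d_g(X,−X)/√(d_g(X,X) d_g(−X,−X))` equals `1`
(even though `X` and `−X` need not be equal almost surely; thus `R_g(X,Y) = 1` does not
imply `X = Y` a.s.). -/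
theorem distCov_neg_self
    {Ω : Type*} [MeasurableSpace Ω] (ℙ : Measure Ω) [IsProbabilityMeasure ℙ]
    [MeasurableSpace C(I, ℝ)] [BorelSpace C(I, ℝ)]
    (X : Ω → C(I, ℝ)) (hX : Measurable X)
    (g : ℝ → ℝ) (hg : Measurable g) (hg_nonneg : ∀ s, 0 ≤ g s)
    (hg_int : (∫ s, g s) = 1) (hg_symm : ∀ s, g (-s) = g s) :
    distCov ℙ X (fun ω => -(X ω)) g = distCov ℙ X X g ∧
      distCov ℙ (fun ω => -(X ω)) (fun ω => -(X ω)) g = distCov ℙ X X g ∧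
      (0 < distCov ℙ X X g →
        distCov ℙ X (fun ω => -(X ω)) g /
          (distCov ℙ X X g *
            distCov ℙ (fun ω => -(X ω)) (fun ω => -(X ω)) g) ^ (1/2 : ℝ) = 1) :=
  distCov_neg_self_general ℙ X g hg_nonneg hg_int hg_symm
end

section
/- Let k ≥ 1 and let w : ℝ → [0,∞) be an integrable measurable function with w(−s) = w(s) for all s. Let U, V be random vectors in ℝ^k on a common probability space, let (U',V') be an independent copy of (U,V), and let V'' be an independent copy of V with (U,V), (U',V'), V'' mutually independent. Then ∫_{ℝ^k}∫_{ℝ^k} |φ_{U,V}(s,t) − φ_U(s)φ_V(t)|² ∏_{j=1}^k w(s_j)w(t_j) ds dt = ∫_{ℝ^k}∫_{ℝ^k} ( E[cos⟨s, U−U'⟩ cos⟨t, V−V'⟩] + E[cos⟨s, U−U'⟩] · E[cos⟨t, V−V'⟩] − 2 E[cos⟨s, U−U'⟩ cos⟨t, V−V''⟩] ) ∏_{j=1}^k w(s_j)w(t_j) ds dt. -/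
/-!
Expanding `‖a - b c‖² = ‖a‖² + ‖b‖²‖c‖² - 2 Re (a b̄ c̄)` and writing each product of
characteristic functions (and their conjugates) as one characteristic function on a product of
copies of `ℙ`, the integrand becomes
`E cos(ΔU_s + ΔV_t) + E cos ΔU_s · E cos ΔV_t - 2 E cos(ΔU_s + ΔV''_t)`, where
`ΔU_s = ⟨s, U - U'⟩` etc. Since `ΔU_{-s} = -ΔU_s` and `cos (x + y) + cos (-x + y) = 2 cos x cos y`,
averaging this integrand at `s` and `-s` gives exactly the claimed cosine integrand, and the
average does not change the integral because the weight is even and Lebesgue measure is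
invariant under `s ↦ -s`.
-/

open MeasureTheory Complex ComplexConjugate Function

lemma Complex.norm_sub_mul_sq (a b c : ℂ) :
    ‖a - b * c‖ ^ 2
      = (a * conj a).re + (b * conj b).re * (c * conj c).re - 2 * (a * conj (b * c)).re := by
  simp only [mul_conj, ofReal_re, Complex.sq_norm, normSq_sub, normSq_mul]

lemma norm_sub_mul_sq_le_four {R : Type*} [SeminormedRing R] {a b c : R}
    (ha : ‖a‖ ≤ 1) (hb : ‖b‖ ≤ 1) (hc : ‖c‖ ≤ 1) : ‖a - b * c‖ ^ 2 ≤ 4 := by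
  have : ‖a - b * c‖ ≤ 2 := calc
    ‖a - b * c‖ ≤ ‖a‖ + ‖b‖ * ‖c‖ := (norm_sub_le _ _).trans (by grw [norm_mul_le])
    _ ≤ 1 + 1 * 1 := by gcongr
    _ = 2 := by norm_num
  nlinarith [norm_nonneg (a - b * c)]

section IntegralCexp

variable {α β : Type*} [MeasurableSpace α] [MeasurableSpace β] {μ : Measure α} {ν : Measure β}

lemma norm_integral_cexp_I_mul_le_one [IsProbabilityMeasure μ] (f : α → ℝ) :
    ‖∫ a, cexp (I * f a) ∂μ‖ ≤ 1 := by
  simpa using norm_integral_le_of_norm_le_const (μ := μ) (C := 1) <| ae_of_all _ fun a => by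
    rw [mul_comm, norm_exp_ofReal_mul_I]

lemma integrable_cexp_I_mul [IsFiniteMeasure μ] {f : α → ℝ} (hf : AEMeasurable f μ) :
    Integrable (fun a => cexp (I * f a)) μ :=
  .of_bound (by fun_prop) 1 <| ae_of_all _ fun a => by rw [mul_comm, norm_exp_ofReal_mul_I]

lemma re_integral_cexp_I_mul [IsFiniteMeasure μ] {f : α → ℝ} (hf : AEMeasurable f μ) :
    (∫ a, cexp (I * f a) ∂μ).re = ∫ a, Real.cos (f a) ∂μ := by
  rw [← RCLike.re_eq_complex_re, ← integral_re (integrable_cexp_I_mul hf)]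
  simp_rw [RCLike.re_eq_complex_re, mul_comm I, exp_ofReal_mul_I_re]

lemma integral_cexp_I_mul_mul_integral [SFinite μ] [SFinite ν] (f : α → ℝ) (g : β → ℝ) :
    (∫ a, cexp (I * f a) ∂μ) * ∫ b, cexp (I * g b) ∂ν
      = ∫ p, cexp (I * ↑(f p.1 + g p.2)) ∂μ.prod ν := by
  rw [← integral_prod_mul]
  push_cast
  simp_rw [mul_add, exp_add]

lemma conj_integral_cexp_I_mul (f : α → ℝ) :
    conj (∫ a, cexp (I * f a) ∂μ) = ∫ a, cexp (I * ↑(-f a)) ∂μ := by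
  rw [← integral_conj]
  simp_rw [← exp_conj, map_mul, conj_I, conj_ofReal, ofReal_neg, mul_neg, neg_mul]

lemma integral_cexp_I_mul_mul_conj_integral [SFinite μ] [SFinite ν] (f : α → ℝ) (g : β → ℝ) :
    (∫ a, cexp (I * f a) ∂μ) * conj (∫ b, cexp (I * g b) ∂ν)
      = ∫ p, cexp (I * ↑(f p.1 - g p.2)) ∂μ.prod ν := by
  simp_rw [conj_integral_cexp_I_mul, integral_cexp_I_mul_mul_integral, sub_eq_add_neg]

lemma stronglyMeasurable_integral_cexp_I_mul [SFinite ν] {f : α → β → ℝ}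
    (hf : Measurable fun p : α × β => f p.1 p.2) :
    StronglyMeasurable (fun a => ∫ b, cexp (I * f a b) ∂ν) :=
  (Measurable.stronglyMeasurable (f := fun p : α × β => cexp (I * f p.1 p.2))
    (by fun_prop)).integral_prod_right'

end IntegralCexp

lemma integral_cos_add_add_integral_cos_neg_add {α : Type*} [MeasurableSpace α] {μ : Measure α}
    [IsFiniteMeasure μ] {f g : α → ℝ} (hf : AEMeasurable f μ) (hg : AEMeasurable g μ) :
    (∫ a, Real.cos (f a + g a) ∂μ) + ∫ a, Real.cos (-f a + g a) ∂μ
      = 2 * ∫ a, Real.cos (f a) * Real.cos (g a) ∂μ := by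
  have hcos : ∀ h : α → ℝ, AEMeasurable h μ → Integrable (fun a => Real.cos (h a)) μ :=
    fun h hh => .of_bound (by fun_prop) 1 (ae_of_all _ fun a => by
      simpa using Real.abs_cos_le_one (h a))
  rw [← integral_add (hcos (fun a => f a + g a) (hf.add hg))
    (hcos (fun a => -f a + g a) (hf.neg.add hg)), ← integral_const_mul]
  congr 1 with a
  rw [Real.cos_add, neg_add_eq_sub, Real.cos_sub]
  ring

section RandomVariables

variable {Ω : Type*} [MeasurableSpace Ω] (P : Measure Ω) [IsProbabilityMeasure P] {X Y : Ω → ℝ}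

lemma norm_integral_cexp_add_sub_mul_sq (hX : Measurable X) (hY : Measurable Y) :
    ‖(∫ ω, cexp (I * ↑(X ω + Y ω)) ∂P) - (∫ ω, cexp (I * X ω) ∂P) * ∫ ω, cexp (I * Y ω) ∂P‖ ^ 2
      = (∫ p, Real.cos ((X p.1 - X p.2) + (Y p.1 - Y p.2)) ∂P.prod P)
        + (∫ p, Real.cos (X p.1 - X p.2) ∂P.prod P) * (∫ p, Real.cos (Y p.1 - Y p.2) ∂P.prod P)
        - 2 * ∫ p, Real.cos ((X p.1 - X p.2.1) + (Y p.1 - Y p.2.2)) ∂P.prod (P.prod P) := by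
  rw [Complex.norm_sub_mul_sq, integral_cexp_I_mul_mul_integral,
    integral_cexp_I_mul_mul_conj_integral, integral_cexp_I_mul_mul_conj_integral,
    integral_cexp_I_mul_mul_conj_integral, integral_cexp_I_mul_mul_conj_integral,
    re_integral_cexp_I_mul (by fun_prop), re_integral_cexp_I_mul (by fun_prop),
    re_integral_cexp_I_mul (by fun_prop), re_integral_cexp_I_mul (by fun_prop)]
  congr 4 <;> ext p <;> ring_nf

lemma norm_integral_cexp_add_sub_mul_sq_add_neg (hX : Measurable X) (hY : Measurable Y) :
    ‖(∫ ω, cexp (I * ↑(X ω + Y ω)) ∂P) - (∫ ω, cexp (I * X ω) ∂P) * ∫ ω, cexp (I * Y ω) ∂P‖ ^ 2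
      + ‖(∫ ω, cexp (I * ↑(-X ω + Y ω)) ∂P)
          - (∫ ω, cexp (I * ↑(-X ω)) ∂P) * ∫ ω, cexp (I * Y ω) ∂P‖ ^ 2
      = 2 * ((∫ p, Real.cos (X p.1 - X p.2) * Real.cos (Y p.1 - Y p.2) ∂P.prod P)
        + (∫ p, Real.cos (X p.1 - X p.2) ∂P.prod P) * (∫ p, Real.cos (Y p.1 - Y p.2) ∂P.prod P)
        - 2 * ∫ p, Real.cos (X p.1 - X p.2.1) * Real.cos (Y p.1 - Y p.2.2)
            ∂P.prod (P.prod P)) := by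
  have hneg : ∀ a b : ℝ, -a - -b = -(a - b) := fun a b => by ring
  rw [norm_integral_cexp_add_sub_mul_sq P hX hY,
    norm_integral_cexp_add_sub_mul_sq P (X := fun ω => -X ω) hX.neg hY]
  simp only [hneg, Real.cos_neg]
  have h₂ := integral_cos_add_add_integral_cos_neg_add (μ := P.prod P)
    (f := fun p => X p.1 - X p.2) (g := fun p => Y p.1 - Y p.2) (by fun_prop) (by fun_prop)
  have h₃ := integral_cos_add_add_integral_cos_neg_add (μ := P.prod (P.prod P))
    (f := fun p => X p.1 - X p.2.1) (g := fun p => Y p.1 - Y p.2.2) (by fun_prop) (by fun_prop)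
  linear_combination h₂ - 2 * h₃

end RandomVariables

lemma integral_integral_eq_of_add_comp_neg {α β : Type*} [MeasurableSpace α] [MeasurableSpace β]
    [AddGroup α] [MeasurableNeg α] {μ : Measure α} [μ.IsNegInvariant] [SFinite μ]
    {ν : Measure β} [SFinite ν] {f g : α → β → ℝ}
    (hf : Integrable (uncurry f) (μ.prod ν)) (hfg : ∀ s t, f s t + f (-s) t = 2 * g s t) :
    ∫ s, ∫ t, f s t ∂ν ∂μ = ∫ s, ∫ t, g s t ∂ν ∂μ := by
  have hf_neg : Integrable (fun p : α × β => f (-p.1) p.2) (μ.prod ν) :=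
    ((Measure.measurePreserving_neg μ).prod (.id ν)).integrable_comp_of_integrable hf
  have h_neg : ∫ s, ∫ t, f (-s) t ∂ν ∂μ = ∫ s, ∫ t, f s t ∂ν ∂μ :=
    integral_neg_eq_self (fun s => ∫ t, f s t ∂ν) μ
  have h_add := integral_integral_add hf hf_neg
  simp only [uncurry_apply_pair, hfg, integral_const_mul] at h_add
  linarith

lemma integrable_prod_weight_mul_prod_weight {ι E : Type*} [Fintype ι] [MeasurableSpace E]
    {μ : Measure E} [SigmaFinite μ] {w : E → ℝ} (hw : Integrable w μ) :
    Integrable (fun p : (ι → E) × (ι → E) => ∏ j, w (p.1 j) * w (p.2 j))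
      ((Measure.pi fun _ => μ).prod (Measure.pi fun _ => μ)) := by
  simp_rw [Finset.prod_mul_distrib]
  exact (Integrable.fintype_prod fun _ => hw).mul_prod (Integrable.fintype_prod fun _ => hw)

theorem distCovariance_cos_representation_general
    {Ω : Type*} [MeasurableSpace Ω] (ℙ : Measure Ω) [IsProbabilityMeasure ℙ]
    {k : ℕ} (U V : Ω → (Fin k → ℝ))
    (hU : Measurable U) (hV : Measurable V)
    (w : ℝ → ℝ)
    (hw_int : Integrable w) (hw_symm : ∀ s, w (-s) = w s) :
    (∫ (s : Fin k → ℝ), ∫ (t : Fin k → ℝ),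
        ‖(∫ ω, Complex.exp (Complex.I *
              ((∑ j, (s j * U ω j + t j * V ω j) : ℝ) : ℂ)) ∂ℙ) -
            (∫ ω, Complex.exp (Complex.I * ((∑ j, s j * U ω j : ℝ) : ℂ)) ∂ℙ) *
            (∫ ω, Complex.exp (Complex.I * ((∑ j, t j * V ω j : ℝ) : ℂ)) ∂ℙ)‖ ^ 2 *
          ∏ j, w (s j) * w (t j))
    = ∫ (s : Fin k → ℝ), ∫ (t : Fin k → ℝ),
        ((∫ ω : Ω × Ω, Real.cos (∑ j, s j * (U ω.1 j - U ω.2 j)) *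
              Real.cos (∑ j, t j * (V ω.1 j - V ω.2 j)) ∂(ℙ.prod ℙ))
          + (∫ ω : Ω × Ω, Real.cos (∑ j, s j * (U ω.1 j - U ω.2 j)) ∂(ℙ.prod ℙ)) *
            (∫ ω : Ω × Ω, Real.cos (∑ j, t j * (V ω.1 j - V ω.2 j)) ∂(ℙ.prod ℙ))
          - 2 * ∫ ω : Ω × Ω × Ω, Real.cos (∑ j, s j * (U ω.1 j - U ω.2.1 j)) *
              Real.cos (∑ j, t j * (V ω.1 j - V ω.2.2 j)) ∂(ℙ.prod (ℙ.prod ℙ))) *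
          ∏ j, w (s j) * w (t j) := by
  refine integral_integral_eq_of_add_comp_neg ?_ fun s t => ?_
  · refine (integrable_prod_weight_mul_prod_weight hw_int).bdd_mul (c := 4) ?_
      (ae_of_all _ fun p => ?_)
    · refine (((stronglyMeasurable_integral_cexp_I_mul ?_).sub
        ((stronglyMeasurable_integral_cexp_I_mul ?_).mul
          (stronglyMeasurable_integral_cexp_I_mul ?_))).norm.pow 2).aestronglyMeasurable
      all_goals fun_prop
    · rw [norm_pow, norm_norm]
      exact norm_sub_mul_sq_le_four (norm_integral_cexp_I_mul_le_one _)
        (norm_integral_cexp_I_mul_le_one _) (norm_integral_cexp_I_mul_le_one _)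
  · have h := norm_integral_cexp_add_sub_mul_sq_add_neg ℙ (X := fun ω => ∑ j, s j * U ω j)
      (Y := fun ω => ∑ j, t j * V ω j) (by fun_prop) (by fun_prop)
    simp only [Pi.neg_apply, neg_mul, Finset.sum_neg_distrib, Finset.sum_add_distrib, mul_sub,
      Finset.sum_sub_distrib, hw_symm] at h ⊢
    linear_combination (∏ j, w (s j) * w (t j)) * h

/-- For an integrable symmetric nonnegative weight `w` on `ℝ` and random
vectors `U, V : Ω → ℝ^k`, with `(U',V')` an independent copy of `(U,V)` and `V''` a
further independent copy of `V` (realized by extra product coordinates),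
`∫∫ |φ_{U,V}(s,t) − φ_U(s)φ_V(t)|² Π_j w(s_j)w(t_j) ds dt
 = ∫∫ (E[cos⟨s,U−U'⟩cos⟨t,V−V'⟩] + E[cos⟨s,U−U'⟩]E[cos⟨t,V−V'⟩]
      − 2E[cos⟨s,U−U'⟩cos⟨t,V−V''⟩]) Π_j w(s_j)w(t_j) ds dt`. -/
theorem distCovariance_cos_representation
    {Ω : Type*} [MeasurableSpace Ω] (ℙ : Measure Ω) [IsProbabilityMeasure ℙ]
    {k : ℕ} (hk : 1 ≤ k) (U V : Ω → (Fin k → ℝ))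
    (hU : Measurable U) (hV : Measurable V)
    (w : ℝ → ℝ) (hw : Measurable w) (hw_nonneg : ∀ s, 0 ≤ w s)
    (hw_int : Integrable w) (hw_symm : ∀ s, w (-s) = w s) :
    (∫ (s : Fin k → ℝ), ∫ (t : Fin k → ℝ),
        ‖(∫ ω, Complex.exp (Complex.I *
              ((∑ j, (s j * U ω j + t j * V ω j) : ℝ) : ℂ)) ∂ℙ) -
            (∫ ω, Complex.exp (Complex.I * ((∑ j, s j * U ω j : ℝ) : ℂ)) ∂ℙ) *
            (∫ ω, Complex.exp (Complex.I * ((∑ j, t j * V ω j : ℝ) : ℂ)) ∂ℙ)‖ ^ 2 *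
          ∏ j, w (s j) * w (t j))
    = ∫ (s : Fin k → ℝ), ∫ (t : Fin k → ℝ),
        ((∫ ω : Ω × Ω, Real.cos (∑ j, s j * (U ω.1 j - U ω.2 j)) *
              Real.cos (∑ j, t j * (V ω.1 j - V ω.2 j)) ∂(ℙ.prod ℙ))
          + (∫ ω : Ω × Ω, Real.cos (∑ j, s j * (U ω.1 j - U ω.2 j)) ∂(ℙ.prod ℙ)) *
            (∫ ω : Ω × Ω, Real.cos (∑ j, t j * (V ω.1 j - V ω.2 j)) ∂(ℙ.prod ℙ))
          - 2 * ∫ ω : Ω × Ω × Ω, Real.cos (∑ j, s j * (U ω.1 j - U ω.2.1 j)) *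
              Real.cos (∑ j, t j * (V ω.1 j - V ω.2.2 j)) ∂(ℙ.prod (ℙ.prod ℙ))) *
          ∏ j, w (s j) * w (t j) :=
  distCovariance_cos_representation_general ℙ U V hU hV w hw_int hw_symm
end

section
/- Let k ≥ 1, α ∈ (0,2), and let g_k(s) = c_k |s|^{−k−α} on ℝ^k, where c_k > 0 is the constant for which ∫_{ℝ^k} (1 − cos⟨s,x⟩) g_k(s) ds = |x|^α for all x ∈ ℝ^k. Let U, V be random vectors in ℝ^k with E[|U|^α] < ∞, E[|V|^α] < ∞ and E[|U|^α |V|^α] < ∞; let (U',V') be an independent copy of (U,V) and V'' an independent copy of V with (U,V), (U',V'), V'' mutually independent. Then ∫_{ℝ^k}∫_{ℝ^k} |φ_{U,V}(s,t) − φ_U(s)φ_V(t)|² g_k(s) g_k(t) ds dt = E[|U−U'|^α |V−V'|^α] + E[|U−U'|^α] · E[|V−V'|^α] − 2 E[|U−U'|^α |V−V''|^α], and all expectations on the right-hand side are finite. -/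
/-!
Write `θ = ⟨s, U⟩`, `η = ⟨t, V⟩` and let primes denote independent copies. Products of
characteristic functions are characteristic functions of sums of independent copies, so
`|φ_{U,V}(s,t) - φ_U(s) φ_V(t)|²` is an explicit combination of expectations of cosines of
differences of copies. Adding the same expression at `-t` cancels all `sin · sin` cross terms and
leaves, pointwise in `(s, t)`,
`2 E[(1 - cos (θ - θ')) (1 - cos (η - η'))] + 2 E[1 - cos (θ - θ')] E[1 - cos (η - η')]
  - 4 E[(1 - cos (θ - θ')) (1 - cos (η - η''))]`.
Since `t ↦ -t` preserves Lebesgue measure and the weight, integrating against `g(s) g(t)` and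
applying Tonelli together with `∫ (1 - cos ⟨s, x⟩) g(s) ds = |x|^α` turns each term into the
corresponding moment. All of this takes place in `[0, ∞]` with the negative term moved to the
other side, so nothing needs to be integrable in `(s, t)`; the moments themselves are finite
because `|x - y|^α ≤ 2^α (|x|^α + |y|^α)`.
-/

open MeasureTheory ComplexConjugate
open scoped ENNReal

namespace DistanceCovariance

lemma one_sub_cos_nonneg (x : ℝ) : 0 ≤ 1 - Real.cos x := by linarith [Real.cos_le_one x]

lemma one_sub_cos_le_two (x : ℝ) : 1 - Real.cos x ≤ 2 := by linarith [Real.neg_one_le_cos x]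

lemma add_rpow_le_two_rpow_mul_rpow_add_rpow {a b p : ℝ} (ha : 0 ≤ a) (hb : 0 ≤ b) (hp : 0 ≤ p) :
    (a + b) ^ p ≤ 2 ^ p * (a ^ p + b ^ p) := calc
  (a + b) ^ p ≤ (2 * max a b) ^ p := by
    gcongr
    linarith [le_max_left a b, le_max_right a b]
  _ = 2 ^ p * max a b ^ p := Real.mul_rpow zero_le_two (le_max_of_le_left ha)
  _ ≤ 2 ^ p * (a ^ p + b ^ p) := by
    gcongr
    rcases max_cases a b with ⟨h, -⟩ | ⟨h, -⟩ <;> rw [h] <;>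
      linarith [Real.rpow_nonneg ha p, Real.rpow_nonneg hb p]

lemma eq_ofReal_sub_of_add_eq {x : ℝ≥0∞} {a b : ℝ} (ha : 0 ≤ a)
    (h : x + ENNReal.ofReal a = ENNReal.ofReal b) : x = ENNReal.ofReal (b - a) := by
  rw [ENNReal.ofReal_sub b ha]
  exact ENNReal.eq_sub_of_add_eq ENNReal.ofReal_ne_top h

section Lintegral

variable {S E : Type*} [MeasurableSpace S] [MeasurableSpace E] {μ : Measure S} {ν : Measure E}

lemma lintegral_ofReal_eq_ofReal_integral_of_le [IsFiniteMeasure μ] {h : S → ℝ}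
    (hm : Measurable h) (h0 : ∀ z, 0 ≤ h z) {C : ℝ} (hC : ∀ z, h z ≤ C) :
    ∫⁻ z, ENNReal.ofReal (h z) ∂μ = ENNReal.ofReal (∫ z, h z ∂μ) := by
  refine (ofReal_integral_eq_lintegral_ofReal (.of_bound hm.aestronglyMeasurable C
    (ae_of_all _ fun z => ?_)) (ae_of_all _ h0)).symm
  rw [Real.norm_of_nonneg (h0 z)]
  exact hC z

lemma lintegral_lintegral_add [SFinite ν] (f : S → E → ℝ≥0∞) {g : S → E → ℝ≥0∞}
    (hg : Measurable fun p : S × E => g p.1 p.2) :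
    ∫⁻ s, ∫⁻ t, (f s t + g s t) ∂ν ∂μ = (∫⁻ s, ∫⁻ t, f s t ∂ν ∂μ) + ∫⁻ s, ∫⁻ t, g s t ∂ν ∂μ :=
  (lintegral_congr fun _ => lintegral_add_right _ (hg.comp measurable_prodMk_left)).trans
    (lintegral_add_right _ hg.lintegral_prod_right')

lemma lintegral_lintegral_add_neg_mul [InvolutiveNeg E] [MeasurableNeg E] [ν.IsNegInvariant]
    {F G : S → E → ℝ≥0∞} (hFG : ∀ s, Measurable fun t => F s t * G s t)
    (hG : ∀ s t, G s (-t) = G s t) :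
    ∫⁻ s, ∫⁻ t, (F s t + F s (-t)) * G s t ∂ν ∂μ = 2 * ∫⁻ s, ∫⁻ t, F s t * G s t ∂ν ∂μ := by
  rw [← lintegral_const_mul' _ _ ENNReal.ofNat_ne_top]
  refine lintegral_congr fun s => ?_
  have hneg : ∫⁻ t, F s (-t) * G s t ∂ν = ∫⁻ t, F s t * G s t ∂ν := by
    simpa only [hG] using lintegral_neg_eq_self (μ := ν) fun t => F s t * G s t
  simp only [add_mul]
  rw [lintegral_add_left (hFG s), hneg, two_mul]

end Lintegral

section MeanExpI

variable {Ω Ω' : Type*} [MeasurableSpace Ω] [MeasurableSpace Ω']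

noncomputable def meanExpI (μ : Measure Ω) (f : Ω → ℝ) : ℂ :=
  ∫ ω, Complex.exp (Complex.I * f ω) ∂μ

lemma meanExpI_neg (μ : Measure Ω) (f : Ω → ℝ) :
    meanExpI μ (fun ω => -f ω) = conj (meanExpI μ f) := by
  simp only [meanExpI, ← integral_conj, ← Complex.exp_conj, map_mul, Complex.conj_I,
    Complex.conj_ofReal, Complex.ofReal_neg, neg_mul, mul_neg]

lemma meanExpI_prod_add (μ : Measure Ω) (ν : Measure Ω') [SFinite μ] [SFinite ν]
    (f : Ω → ℝ) (g : Ω' → ℝ) :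
    meanExpI (μ.prod ν) (fun z => f z.1 + g z.2) = meanExpI μ f * meanExpI ν g := by
  simp only [meanExpI, ← integral_prod_mul, Complex.ofReal_add, mul_add, Complex.exp_add]

lemma meanExpI_prod_sub (μ : Measure Ω) (ν : Measure Ω') [SFinite μ] [SFinite ν]
    (f : Ω → ℝ) (g : Ω' → ℝ) :
    meanExpI (μ.prod ν) (fun z => f z.1 - g z.2) = meanExpI μ f * conj (meanExpI ν g) := by
  simp only [sub_eq_add_neg, meanExpI_prod_add μ ν f (fun ω => -g ω), meanExpI_neg]

lemma meanExpI_comp_fst (μ : Measure Ω) (ν : Measure Ω') [SFinite μ] [IsProbabilityMeasure ν]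
    (f : Ω → ℝ) : meanExpI (μ.prod ν) (fun z => f z.1) = meanExpI μ f := by
  simpa [meanExpI] using integral_fun_fst (μ := μ) (ν := ν) fun ω => Complex.exp (Complex.I * f ω)

lemma meanExpI_comp_snd (μ : Measure Ω) (ν : Measure Ω') [IsProbabilityMeasure μ] [SFinite ν]
    (f : Ω' → ℝ) : meanExpI (μ.prod ν) (fun z => f z.2) = meanExpI ν f := by
  simpa [meanExpI] using integral_fun_snd (μ := μ) (ν := ν) fun ω => Complex.exp (Complex.I * f ω)

lemma measurable_meanExpI {T : Type*} [MeasurableSpace T] (μ : Measure Ω) [SFinite μ]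
    {f : T × Ω → ℝ} (hf : Measurable f) :
    Measurable fun t => meanExpI μ (fun ω => f (t, ω)) :=
  (Measurable.stronglyMeasurable (by fun_prop : Measurable fun p : T × Ω =>
    Complex.exp (Complex.I * f p))).integral_prod_right'.measurable

@[fun_prop]
lemma integrable_cos_comp (μ : Measure Ω) [IsFiniteMeasure μ] {f : Ω → ℝ} (hf : Measurable f) :
    Integrable (fun ω => Real.cos (f ω)) μ :=
  .of_bound (by fun_prop) 1 (ae_of_all _ fun ω => by simpa using Real.abs_cos_le_one (f ω))

lemma integral_cos_eq_re_meanExpI (μ : Measure Ω) [IsFiniteMeasure μ] {f : Ω → ℝ}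
    (hf : Measurable f) : ∫ ω, Real.cos (f ω) ∂μ = (meanExpI μ f).re := by
  have hint : Integrable (fun ω => Complex.exp (Complex.I * f ω)) μ :=
    .of_bound (by fun_prop) 1 (ae_of_all _ fun ω => by simp [Complex.norm_exp])
  rw [meanExpI, ← RCLike.re_eq_complex_re, ← integral_re hint]
  simp [mul_comm Complex.I, Complex.exp_ofReal_mul_I_re]

lemma integral_cos_sub_prod (μ : Measure Ω) (ν : Measure Ω') [IsFiniteMeasure μ]
    [IsFiniteMeasure ν] {f : Ω → ℝ} {g : Ω' → ℝ} (hf : Measurable f) (hg : Measurable g) :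
    ∫ z, Real.cos (f z.1 - g z.2) ∂μ.prod ν = (meanExpI μ f * conj (meanExpI ν g)).re := by
  rw [integral_cos_eq_re_meanExpI _ (by fun_prop), meanExpI_prod_sub]

variable (μ : Measure Ω) (ν : Measure Ω') [IsProbabilityMeasure μ] [IsProbabilityMeasure ν]

lemma integral_one_sub_cos_sub_prod {f : Ω → ℝ} {g : Ω' → ℝ} (hf : Measurable f)
    (hg : Measurable g) :
    ∫ z, (1 - Real.cos (f z.1 - g z.2)) ∂μ.prod ν
      = 1 - (meanExpI μ f * conj (meanExpI ν g)).re := by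
  rw [integral_sub (integrable_const 1) (integrable_cos_comp _ (by fun_prop)),
    integral_cos_sub_prod μ ν hf hg]
  simp

lemma integral_one_sub_cos_mul_one_sub_cos_prod {f₁ f₂ : Ω → ℝ} {g₁ g₂ : Ω' → ℝ}
    (hf₁ : Measurable f₁) (hf₂ : Measurable f₂) (hg₁ : Measurable g₁) (hg₂ : Measurable g₂) :
    ∫ z, (1 - Real.cos (f₁ z.1 - g₁ z.2)) * (1 - Real.cos (f₂ z.1 - g₂ z.2)) ∂μ.prod ν
      = 1 - (meanExpI μ f₁ * conj (meanExpI ν g₁)).re - (meanExpI μ f₂ * conj (meanExpI ν g₂)).re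
        + ((meanExpI μ (fun x => f₁ x + f₂ x) * conj (meanExpI ν (fun y => g₁ y + g₂ y))).re
          + (meanExpI μ (fun x => f₁ x - f₂ x) * conj (meanExpI ν (fun y => g₁ y - g₂ y))).re)
          / 2 := by
  have trig : ∀ x y, (1 - Real.cos (f₁ x - g₁ y)) * (1 - Real.cos (f₂ x - g₂ y))
      = 1 - Real.cos (f₁ x - g₁ y) - Real.cos (f₂ x - g₂ y)
        + (Real.cos ((f₁ x + f₂ x) - (g₁ y + g₂ y)) + Real.cos ((f₁ x - f₂ x) - (g₁ y - g₂ y)))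
          / 2 := by
    intro x y
    rw [show f₁ x + f₂ x - (g₁ y + g₂ y) = (f₁ x - g₁ y) + (f₂ x - g₂ y) by ring,
      show f₁ x - f₂ x - (g₁ y - g₂ y) = (f₁ x - g₁ y) - (f₂ x - g₂ y) by ring,
      Real.cos_add (f₁ x - g₁ y), Real.cos_sub (f₁ x - g₁ y)]
    ring
  simp only [trig]
  rw [integral_add (by fun_prop) (by fun_prop), integral_sub (by fun_prop) (by fun_prop),
    integral_sub (by fun_prop) (by fun_prop), integral_div,
    integral_add (by fun_prop) (by fun_prop), integral_cos_sub_prod μ ν hf₁ hg₁,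
    integral_cos_sub_prod μ ν hf₂ hg₂,
    integral_cos_sub_prod μ ν (f := fun x => f₁ x + f₂ x) (g := fun y => g₁ y + g₂ y)
      (by fun_prop) (by fun_prop),
    integral_cos_sub_prod μ ν (f := fun x => f₁ x - f₂ x) (g := fun y => g₁ y - g₂ y)
      (by fun_prop) (by fun_prop)]
  simp

/-- `θ` and `η` play the roles of `⟨s, U⟩` and `⟨t, V⟩`: the second norm is the first one
at `-t`. -/
lemma sq_norm_meanExpI_sub_mul_symm (ℙ : Measure Ω) [IsProbabilityMeasure ℙ] {θ η : Ω → ℝ}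
    (hθ : Measurable θ) (hη : Measurable η) :
    ‖meanExpI ℙ (fun ω => θ ω + η ω) - meanExpI ℙ θ * meanExpI ℙ η‖ ^ 2
      + ‖meanExpI ℙ (fun ω => θ ω - η ω) - meanExpI ℙ θ * meanExpI ℙ (fun ω => -η ω)‖ ^ 2
      + 4 * ∫ z, (1 - Real.cos (θ z.1 - θ z.2.1)) * (1 - Real.cos (η z.1 - η z.2.2))
          ∂ℙ.prod (ℙ.prod ℙ)
    = 2 * ∫ z, (1 - Real.cos (θ z.1 - θ z.2)) * (1 - Real.cos (η z.1 - η z.2)) ∂ℙ.prod ℙ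
      + 2 * ((∫ z, (1 - Real.cos (θ z.1 - θ z.2)) ∂ℙ.prod ℙ)
        * ∫ z, (1 - Real.cos (η z.1 - η z.2)) ∂ℙ.prod ℙ) := by
  rw [integral_one_sub_cos_mul_one_sub_cos_prod ℙ (ℙ.prod ℙ) hθ hη (g₁ := fun y => θ y.1)
      (g₂ := fun y => η y.2) (by fun_prop) (by fun_prop),
    integral_one_sub_cos_mul_one_sub_cos_prod ℙ ℙ hθ hη hθ hη,
    integral_one_sub_cos_sub_prod ℙ ℙ hθ hθ, integral_one_sub_cos_sub_prod ℙ ℙ hη hη,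
    meanExpI_comp_fst, meanExpI_comp_snd, meanExpI_prod_add, meanExpI_prod_sub, meanExpI_neg]
  simp only [Complex.sq_norm, Complex.normSq_sub, Complex.mul_conj,
    Complex.ofReal_re, map_mul, Complex.conj_conj, Complex.normSq_conj]
  ring

end MeanExpI

section CharFunDiffSq

variable {ι κ : Type*} [Fintype ι] [Fintype κ] {Ω : Type*} [MeasurableSpace Ω]
  (ℙ : Measure Ω) {U : Ω → ι → ℝ} {V : Ω → κ → ℝ}

noncomputable def oneSubCos (s x : ι → ℝ) : ℝ≥0∞ := ENNReal.ofReal (1 - Real.cos (s ⬝ᵥ x))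

@[fun_prop]
lemma Measurable.oneSubCos {α : Type*} [MeasurableSpace α] {f g : α → ι → ℝ} (hf : Measurable f)
    (hg : Measurable g) : Measurable fun a => oneSubCos (f a) (g a) := by
  unfold DistanceCovariance.oneSubCos
  fun_prop

/-- `|φ_{U,V}(s, t) - φ_U(s) φ_V(t)|²`. -/
noncomputable def charFunDiffSq (U : Ω → ι → ℝ) (V : Ω → κ → ℝ) (s : ι → ℝ) (t : κ → ℝ) : ℝ :=
  ‖meanExpI ℙ (fun ω => s ⬝ᵥ U ω + t ⬝ᵥ V ω)
    - meanExpI ℙ (fun ω => s ⬝ᵥ U ω) * meanExpI ℙ (fun ω => t ⬝ᵥ V ω)‖ ^ 2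

lemma charFunDiffSq_nonneg (U : Ω → ι → ℝ) (V : Ω → κ → ℝ) (s : ι → ℝ) (t : κ → ℝ) :
    0 ≤ charFunDiffSq ℙ U V s t :=
  sq_nonneg _

lemma measurable_charFunDiffSq [SFinite ℙ] (hU : Measurable U) (hV : Measurable V) (s : ι → ℝ) :
    Measurable (charFunDiffSq ℙ U V s) := by
  have h₁ := measurable_meanExpI ℙ (f := fun p : (κ → ℝ) × Ω => s ⬝ᵥ U p.2 + p.1 ⬝ᵥ V p.2)
    (by fun_prop)
  have h₂ := measurable_meanExpI ℙ (f := fun p : (κ → ℝ) × Ω => p.1 ⬝ᵥ V p.2) (by fun_prop)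
  unfold charFunDiffSq
  fun_prop

lemma ofReal_charFunDiffSq_add_neg [IsProbabilityMeasure ℙ] (hU : Measurable U)
    (hV : Measurable V) (s : ι → ℝ) (t : κ → ℝ) :
    ENNReal.ofReal (charFunDiffSq ℙ U V s t) + ENNReal.ofReal (charFunDiffSq ℙ U V s (-t))
      + 4 * ∫⁻ z, oneSubCos s (U z.1 - U z.2.1) * oneSubCos t (V z.1 - V z.2.2) ∂ℙ.prod (ℙ.prod ℙ)
    = 2 * ∫⁻ z, oneSubCos s (U z.1 - U z.2) * oneSubCos t (V z.1 - V z.2) ∂ℙ.prod ℙ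
      + 2 * ((∫⁻ z, oneSubCos s (U z.1 - U z.2) ∂ℙ.prod ℙ)
        * ∫⁻ z, oneSubCos t (V z.1 - V z.2) ∂ℙ.prod ℙ) := by
  have h4 (x y : ℝ) : (1 - Real.cos x) * (1 - Real.cos y) ≤ 2 * 2 :=
    mul_le_mul (one_sub_cos_le_two x) (one_sub_cos_le_two y) (one_sub_cos_nonneg y) zero_le_two
  have h0 (x y : ℝ) := mul_nonneg (one_sub_cos_nonneg x) (one_sub_cos_nonneg y)
  simp only [charFunDiffSq, oneSubCos, dotProduct_sub, neg_dotProduct, ← sub_eq_add_neg,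
    ← ENNReal.ofReal_mul (one_sub_cos_nonneg _)]
  rw [lintegral_ofReal_eq_ofReal_integral_of_le (by fun_prop) (fun _ => h0 _ _) (fun _ => h4 _ _),
    lintegral_ofReal_eq_ofReal_integral_of_le (by fun_prop) (fun _ => h0 _ _) (fun _ => h4 _ _),
    lintegral_ofReal_eq_ofReal_integral_of_le (by fun_prop) (fun _ => one_sub_cos_nonneg _)
      (fun _ => one_sub_cos_le_two _),
    lintegral_ofReal_eq_ofReal_integral_of_le (by fun_prop) (fun _ => one_sub_cos_nonneg _)
      (fun _ => one_sub_cos_le_two _),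
    ← ENNReal.ofReal_mul (integral_nonneg fun _ => one_sub_cos_nonneg _), ← ENNReal.ofReal_ofNat 2,
    ← ENNReal.ofReal_ofNat 4, ← ENNReal.ofReal_mul zero_le_two, ← ENNReal.ofReal_mul zero_le_two,
    ← ENNReal.ofReal_mul zero_le_four, ← ENNReal.ofReal_add (by positivity) (by positivity),
    ← ENNReal.ofReal_add (by positivity)
      (mul_nonneg zero_le_four (integral_nonneg fun _ => h0 _ _)),
    ← ENNReal.ofReal_add (mul_nonneg zero_le_two (integral_nonneg fun _ => h0 _ _))
      (mul_nonneg zero_le_two (mul_nonneg (integral_nonneg fun _ => one_sub_cos_nonneg _)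
        (integral_nonneg fun _ => one_sub_cos_nonneg _))),
    sq_norm_meanExpI_sub_mul_symm ℙ (θ := fun ω => s ⬝ᵥ U ω) (η := fun ω => t ⬝ᵥ V ω)
      (by fun_prop) (by fun_prop)]

end CharFunDiffSq

section LevyDensity

variable {ι κ : Type*} [Fintype ι] [Fintype κ]

structure IsLevyDensity (g N : (ι → ℝ) → ℝ) : Prop where
  measurable : Measurable g
  nonneg : ∀ s, 0 ≤ g s
  lintegral_one_sub_cos_mul :
    ∀ x, ∫⁻ s, ENNReal.ofReal ((1 - Real.cos (s ⬝ᵥ x)) * g s) = ENNReal.ofReal (N x)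

variable {g₁ N₁ : (ι → ℝ) → ℝ} {g₂ N₂ : (κ → ℝ) → ℝ} {W : Type*} [MeasurableSpace W]
  (μ : Measure W) [SFinite μ] {X : W → ι → ℝ} {Y : W → κ → ℝ}

lemma IsLevyDensity.lintegral_oneSubCos_mul (hg : IsLevyDensity g₁ N₁) (x : ι → ℝ) :
    ∫⁻ s, oneSubCos s x * ENNReal.ofReal (g₁ s) = ENNReal.ofReal (N₁ x) := by
  simp only [oneSubCos, ← ENNReal.ofReal_mul (one_sub_cos_nonneg _), hg.lintegral_one_sub_cos_mul]

lemma IsLevyDensity.lintegral_lintegral_oneSubCos_mul (hg : IsLevyDensity g₁ N₁)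
    (hX : Measurable X) :
    ∫⁻ s, (∫⁻ w, oneSubCos s (X w) ∂μ) * ENNReal.ofReal (g₁ s)
      = ∫⁻ w, ENNReal.ofReal (N₁ (X w)) ∂μ := by
  have := hg.measurable
  simp only [← lintegral_mul_const' _ _ ENNReal.ofReal_ne_top]
  rw [lintegral_lintegral_swap (by fun_prop)]
  simp only [hg.lintegral_oneSubCos_mul]

lemma IsLevyDensity.lintegral_lintegral_oneSubCos_mul_oneSubCos (hg₁ : IsLevyDensity g₁ N₁)
    (hg₂ : IsLevyDensity g₂ N₂) (hX : Measurable X) (hY : Measurable Y) :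
    ∫⁻ s, ∫⁻ t, (∫⁻ w, oneSubCos s (X w) * oneSubCos t (Y w) ∂μ)
        * (ENNReal.ofReal (g₁ s) * ENNReal.ofReal (g₂ t))
      = ∫⁻ w, ENNReal.ofReal (N₁ (X w)) * ENNReal.ofReal (N₂ (Y w)) ∂μ := by
  have := hg₁.measurable
  have := hg₂.measurable
  calc _ = ∫⁻ s, ∫⁻ w, oneSubCos s (X w) * ENNReal.ofReal (g₁ s)
          * (∫⁻ t, oneSubCos t (Y w) * ENNReal.ofReal (g₂ t)) ∂μ := by
        refine lintegral_congr fun s => ?_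
        simp only [← lintegral_mul_const' _ _ (ENNReal.mul_ne_top ENNReal.ofReal_ne_top
          ENNReal.ofReal_ne_top)]
        rw [lintegral_lintegral_swap (by fun_prop)]
        refine lintegral_congr fun w => ?_
        rw [← lintegral_const_mul _ (by fun_prop)]
        exact lintegral_congr fun t => by ring
    _ = ∫⁻ w, (∫⁻ s, oneSubCos s (X w) * ENNReal.ofReal (g₁ s))
          * (∫⁻ t, oneSubCos t (Y w) * ENNReal.ofReal (g₂ t)) ∂μ := by
        rw [lintegral_lintegral_swap (by fun_prop)]
        exact lintegral_congr fun w => lintegral_mul_const _ (by fun_prop)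
    _ = _ := by simp only [hg₁.lintegral_oneSubCos_mul, hg₂.lintegral_oneSubCos_mul]

lemma IsLevyDensity.lintegral_lintegral_oneSubCos_mul_lintegral_oneSubCos
    (hg₁ : IsLevyDensity g₁ N₁) (hg₂ : IsLevyDensity g₂ N₂) (hX : Measurable X)
    (hY : Measurable Y) :
    ∫⁻ s, ∫⁻ t, (∫⁻ w, oneSubCos s (X w) ∂μ) * (∫⁻ w, oneSubCos t (Y w) ∂μ)
        * (ENNReal.ofReal (g₁ s) * ENNReal.ofReal (g₂ t))
      = (∫⁻ w, ENNReal.ofReal (N₁ (X w)) ∂μ) * ∫⁻ w, ENNReal.ofReal (N₂ (Y w)) ∂μ := by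
  have := hg₁.measurable
  have := hg₂.measurable
  simp only [mul_mul_mul_comm]
  rw [lintegral_lintegral_mul (by fun_prop) (by fun_prop),
    hg₁.lintegral_lintegral_oneSubCos_mul μ hX, hg₂.lintegral_lintegral_oneSubCos_mul μ hY]

end LevyDensity

section Representation

variable {ι κ : Type*} [Fintype ι] [Fintype κ] {Ω : Type*} [MeasurableSpace Ω]
  (ℙ : Measure Ω) [IsProbabilityMeasure ℙ] {U : Ω → ι → ℝ} {V : Ω → κ → ℝ}
  {g₁ N₁ : (ι → ℝ) → ℝ} {g₂ N₂ : (κ → ℝ) → ℝ}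

theorem lintegral_charFunDiffSq_mul_add (hU : Measurable U) (hV : Measurable V)
    (hg₁ : IsLevyDensity g₁ N₁) (hg₂ : IsLevyDensity g₂ N₂) (hg₂_even : ∀ t, g₂ (-t) = g₂ t) :
    (∫⁻ s, ∫⁻ t, ENNReal.ofReal (charFunDiffSq ℙ U V s t * (g₁ s * g₂ t)))
      + 2 * ∫⁻ ω, ENNReal.ofReal (N₁ (U ω.1 - U ω.2.1)) * ENNReal.ofReal (N₂ (V ω.1 - V ω.2.2))
          ∂ℙ.prod (ℙ.prod ℙ)
    = ∫⁻ ω, ENNReal.ofReal (N₁ (U ω.1 - U ω.2)) * ENNReal.ofReal (N₂ (V ω.1 - V ω.2)) ∂ℙ.prod ℙ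
      + (∫⁻ ω, ENNReal.ofReal (N₁ (U ω.1 - U ω.2)) ∂ℙ.prod ℙ)
        * ∫⁻ ω, ENNReal.ofReal (N₂ (V ω.1 - V ω.2)) ∂ℙ.prod ℙ := by
  have := hg₁.measurable
  have := hg₂.measurable
  simp only [ENNReal.ofReal_mul (charFunDiffSq_nonneg ℙ U V _ _), ENNReal.ofReal_mul (hg₁.nonneg _)]
  rw [← hg₁.lintegral_lintegral_oneSubCos_mul_oneSubCos _ hg₂ (by fun_prop) (by fun_prop),
    ← hg₁.lintegral_lintegral_oneSubCos_mul_oneSubCos _ hg₂ (by fun_prop) (by fun_prop),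
    ← hg₁.lintegral_lintegral_oneSubCos_mul_lintegral_oneSubCos _ hg₂ (by fun_prop) (by fun_prop)]
  refine (ENNReal.mul_right_inj two_ne_zero ENNReal.ofNat_ne_top).1 ?_
  calc _ = (∫⁻ s, ∫⁻ t, (ENNReal.ofReal (charFunDiffSq ℙ U V s t)
            + ENNReal.ofReal (charFunDiffSq ℙ U V s (-t)))
              * (ENNReal.ofReal (g₁ s) * ENNReal.ofReal (g₂ t)))
        + ∫⁻ s, ∫⁻ t, 4 * ((∫⁻ z, oneSubCos s (U z.1 - U z.2.1) * oneSubCos t (V z.1 - V z.2.2)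
            ∂ℙ.prod (ℙ.prod ℙ)) * (ENNReal.ofReal (g₁ s) * ENNReal.ofReal (g₂ t))) := by
        rw [lintegral_lintegral_add_neg_mul
          (fun s => (measurable_charFunDiffSq ℙ hU hV s).ennreal_ofReal.mul (by fun_prop))
          (fun s t => by rw [hg₂_even])]
        simp only [lintegral_const_mul' _ _ ENNReal.ofNat_ne_top]
        ring
    _ = ∫⁻ s, ∫⁻ t,
          (2 * ((∫⁻ z, oneSubCos s (U z.1 - U z.2) * oneSubCos t (V z.1 - V z.2) ∂ℙ.prod ℙ)
            * (ENNReal.ofReal (g₁ s) * ENNReal.ofReal (g₂ t)))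
          + 2 * ((∫⁻ z, oneSubCos s (U z.1 - U z.2) ∂ℙ.prod ℙ)
            * (∫⁻ z, oneSubCos t (V z.1 - V z.2) ∂ℙ.prod ℙ)
              * (ENNReal.ofReal (g₁ s) * ENNReal.ofReal (g₂ t)))) := by
        rw [← lintegral_lintegral_add _ (by fun_prop)]
        refine lintegral_congr fun s => lintegral_congr fun t => ?_
        have h := congrArg (· * (ENNReal.ofReal (g₁ s) * ENNReal.ofReal (g₂ t)))
          (ofReal_charFunDiffSq_add_neg ℙ hU hV s t)
        ring_nf at h ⊢
        exact h
    _ = _ := by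
        rw [lintegral_lintegral_add _ (by fun_prop)]
        simp only [lintegral_const_mul' _ _ ENNReal.ofNat_ne_top]
        ring

theorem lintegral_charFunDiffSq_mul_eq_ofReal (hU : Measurable U) (hV : Measurable V)
    (hg₁ : IsLevyDensity g₁ N₁) (hg₂ : IsLevyDensity g₂ N₂) (hg₂_even : ∀ t, g₂ (-t) = g₂ t)
    (hN₁ : ∀ x, 0 ≤ N₁ x) (hN₂ : ∀ x, 0 ≤ N₂ x)
    (hUV₂ : Integrable (fun ω : Ω × Ω => N₁ (U ω.1 - U ω.2) * N₂ (V ω.1 - V ω.2)) (ℙ.prod ℙ))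
    (hU₂ : Integrable (fun ω : Ω × Ω => N₁ (U ω.1 - U ω.2)) (ℙ.prod ℙ))
    (hV₂ : Integrable (fun ω : Ω × Ω => N₂ (V ω.1 - V ω.2)) (ℙ.prod ℙ))
    (hUV₃ : Integrable (fun ω : Ω × Ω × Ω => N₁ (U ω.1 - U ω.2.1) * N₂ (V ω.1 - V ω.2.2))
      (ℙ.prod (ℙ.prod ℙ))) :
    ∫⁻ s, ∫⁻ t, ENNReal.ofReal (charFunDiffSq ℙ U V s t * (g₁ s * g₂ t))
      = ENNReal.ofReal ((∫ ω, N₁ (U ω.1 - U ω.2) * N₂ (V ω.1 - V ω.2) ∂ℙ.prod ℙ)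
          + (∫ ω, N₁ (U ω.1 - U ω.2) ∂ℙ.prod ℙ) * (∫ ω, N₂ (V ω.1 - V ω.2) ∂ℙ.prod ℙ)
          - 2 * ∫ ω, N₁ (U ω.1 - U ω.2.1) * N₂ (V ω.1 - V ω.2.2) ∂ℙ.prod (ℙ.prod ℙ)) := by
  have key := lintegral_charFunDiffSq_mul_add ℙ hU hV hg₁ hg₂ hg₂_even
  have hE₂ : 0 ≤ ∫ ω, N₁ (U ω.1 - U ω.2) * N₂ (V ω.1 - V ω.2) ∂ℙ.prod ℙ :=
    integral_nonneg fun _ => mul_nonneg (hN₁ _) (hN₂ _)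
  have hE₃ : 0 ≤ ∫ ω, N₁ (U ω.1 - U ω.2.1) * N₂ (V ω.1 - V ω.2.2) ∂ℙ.prod (ℙ.prod ℙ) :=
    integral_nonneg fun _ => mul_nonneg (hN₁ _) (hN₂ _)
  have hEU : 0 ≤ ∫ ω, N₁ (U ω.1 - U ω.2) ∂ℙ.prod ℙ := integral_nonneg fun _ => hN₁ _
  simp only [← ENNReal.ofReal_mul (hN₁ _)] at key
  rw [← ofReal_integral_eq_lintegral_ofReal hUV₂ (ae_of_all _ fun _ => mul_nonneg (hN₁ _) (hN₂ _)),
    ← ofReal_integral_eq_lintegral_ofReal hUV₃ (ae_of_all _ fun _ => mul_nonneg (hN₁ _) (hN₂ _)),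
    ← ofReal_integral_eq_lintegral_ofReal hU₂ (ae_of_all _ fun _ => hN₁ _),
    ← ofReal_integral_eq_lintegral_ofReal hV₂ (ae_of_all _ fun _ => hN₂ _),
    ← ENNReal.ofReal_mul hEU,
    ← ENNReal.ofReal_add hE₂ (mul_nonneg hEU (integral_nonneg fun _ => hN₂ _)),
    ← ENNReal.ofReal_ofNat 2, ← ENNReal.ofReal_mul zero_le_two] at key
  exact eq_ofReal_sub_of_add_eq (mul_nonneg zero_le_two hE₃) key

end Representation

section EuclideanRpow

variable {ι κ : Type*} [Fintype ι] [Fintype κ]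

noncomputable def euclidRpow (α : ℝ) (x : ι → ℝ) : ℝ := (∑ j, x j ^ 2) ^ (α / 2)

lemma euclidRpow_nonneg (α : ℝ) (x : ι → ℝ) : 0 ≤ euclidRpow α x :=
  Real.rpow_nonneg (by positivity) _

@[fun_prop]
lemma measurable_euclidRpow (α : ℝ) : Measurable (euclidRpow (ι := ι) α) := by
  unfold euclidRpow
  fun_prop

lemma euclidRpow_eq_norm_rpow (α : ℝ) (x : ι → ℝ) : euclidRpow α x = ‖WithLp.toLp 2 x‖ ^ α := by
  rw [EuclideanSpace.norm_eq, Real.sqrt_eq_rpow, ← Real.rpow_mul (by positivity)]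
  simp [euclidRpow, div_eq_inv_mul]

lemma euclidRpow_sub_le {α : ℝ} (hα : 0 ≤ α) (x y : ι → ℝ) :
    euclidRpow α (x - y) ≤ 2 ^ α * (euclidRpow α x + euclidRpow α y) := by
  simp only [euclidRpow_eq_norm_rpow, WithLp.toLp_sub]
  calc _ ≤ (‖WithLp.toLp 2 x‖ + ‖WithLp.toLp 2 y‖) ^ α := by gcongr; exact norm_sub_le _ _
    _ ≤ _ := add_rpow_le_two_rpow_mul_rpow_add_rpow (norm_nonneg _) (norm_nonneg _) hα

variable {P : Type*} [MeasurableSpace P] {π : Measure P} {α β : ℝ}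

lemma integrable_euclidRpow_sub (hα : 0 ≤ α) {X₁ X₂ : P → ι → ℝ} (hX₁ : Measurable X₁)
    (hX₂ : Measurable X₂) (h₁ : Integrable (fun p => euclidRpow α (X₁ p)) π)
    (h₂ : Integrable (fun p => euclidRpow α (X₂ p)) π) :
    Integrable (fun p => euclidRpow α (X₁ p - X₂ p)) π := by
  refine ((h₁.add h₂).const_mul (2 ^ α)).mono' (Measurable.aestronglyMeasurable (by fun_prop))
    (ae_of_all _ fun p => ?_)
  rw [Real.norm_of_nonneg (euclidRpow_nonneg _ _)]
  exact euclidRpow_sub_le hα _ _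

lemma integrable_euclidRpow_sub_mul_euclidRpow_sub (hα : 0 ≤ α) (hβ : 0 ≤ β)
    {X₁ X₂ : P → ι → ℝ} {Y₁ Y₂ : P → κ → ℝ} (hX₁ : Measurable X₁) (hX₂ : Measurable X₂)
    (hY₁ : Measurable Y₁) (hY₂ : Measurable Y₂)
    (h₁₁ : Integrable (fun p => euclidRpow α (X₁ p) * euclidRpow β (Y₁ p)) π)
    (h₁₂ : Integrable (fun p => euclidRpow α (X₁ p) * euclidRpow β (Y₂ p)) π)
    (h₂₁ : Integrable (fun p => euclidRpow β (Y₁ p) * euclidRpow α (X₂ p)) π)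
    (h₂₂ : Integrable (fun p => euclidRpow α (X₂ p) * euclidRpow β (Y₂ p)) π) :
    Integrable (fun p => euclidRpow α (X₁ p - X₂ p) * euclidRpow β (Y₁ p - Y₂ p)) π := by
  refine (((h₁₁.add h₁₂).add (h₂₁.add h₂₂)).const_mul (2 ^ α * 2 ^ β)).mono'
    (Measurable.aestronglyMeasurable (by fun_prop)) (ae_of_all _ fun p => ?_)
  rw [Real.norm_of_nonneg (mul_nonneg (euclidRpow_nonneg _ _) (euclidRpow_nonneg _ _))]
  calc _ ≤ 2 ^ α * (euclidRpow α (X₁ p) + euclidRpow α (X₂ p))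
        * (2 ^ β * (euclidRpow β (Y₁ p) + euclidRpow β (Y₂ p))) :=
      mul_le_mul (euclidRpow_sub_le hα _ _) (euclidRpow_sub_le hβ _ _) (euclidRpow_nonneg _ _)
        (mul_nonneg (by positivity) (add_nonneg (euclidRpow_nonneg _ _) (euclidRpow_nonneg _ _)))
    _ = _ := by simp only [Pi.add_apply]; ring

variable {Ω : Type*} [MeasurableSpace Ω] (ℙ : Measure Ω) [IsProbabilityMeasure ℙ]
  {U : Ω → ι → ℝ} {V : Ω → κ → ℝ} (hα : 0 ≤ α) (hβ : 0 ≤ β) (hU : Measurable U)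
  (hV : Measurable V) (hUα : Integrable (fun ω => euclidRpow α (U ω)) ℙ)
  (hVβ : Integrable (fun ω => euclidRpow β (V ω)) ℙ)
  (hUVαβ : Integrable (fun ω => euclidRpow α (U ω) * euclidRpow β (V ω)) ℙ)
include hα hU hUα

lemma integrable_euclidRpow_sub_prod :
    Integrable (fun ω : Ω × Ω => euclidRpow α (U ω.1 - U ω.2)) (ℙ.prod ℙ) :=
  integrable_euclidRpow_sub hα (by fun_prop) (by fun_prop) (hUα.comp_fst ℙ) (hUα.comp_snd ℙ)

include hβ hV hVβ hUVαβ

lemma integrable_euclidRpow_sub_mul_euclidRpow_sub_prod :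
    Integrable (fun ω : Ω × Ω => euclidRpow α (U ω.1 - U ω.2) * euclidRpow β (V ω.1 - V ω.2))
      (ℙ.prod ℙ) :=
  integrable_euclidRpow_sub_mul_euclidRpow_sub hα hβ (by fun_prop) (by fun_prop) (by fun_prop)
    (by fun_prop) (hUVαβ.comp_fst ℙ) (hUα.mul_prod hVβ) (hVβ.mul_prod hUα) (hUVαβ.comp_snd ℙ)

lemma integrable_euclidRpow_sub_mul_euclidRpow_sub_prod_prod :
    Integrable (fun ω : Ω × Ω × Ω =>
      euclidRpow α (U ω.1 - U ω.2.1) * euclidRpow β (V ω.1 - V ω.2.2)) (ℙ.prod (ℙ.prod ℙ)) :=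
  integrable_euclidRpow_sub_mul_euclidRpow_sub hα hβ (by fun_prop) (by fun_prop) (by fun_prop)
    (by fun_prop) (hUVαβ.comp_fst _) (hUα.mul_prod (hVβ.comp_snd ℙ))
    (hVβ.mul_prod (hUα.comp_fst ℙ)) ((hUα.mul_prod hVβ).comp_snd ℙ)

end EuclideanRpow

end DistanceCovariance

open DistanceCovariance

theorem distCovariance_alpha_representation_general
    {Ω : Type*} [MeasurableSpace Ω] (ℙ : Measure Ω) [IsProbabilityMeasure ℙ]
    {k : ℕ} (α : ℝ) (hα : α ∈ Set.Ioo 0 2)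
    (c : ℝ) (hc : 0 < c)
    (hc_norm : ∀ x : Fin k → ℝ,
      (∫⁻ (s : Fin k → ℝ),
          ENNReal.ofReal
            ((1 - Real.cos (∑ j, s j * x j)) *
              (c * (∑ j, s j ^ 2) ^ ((-((k : ℝ) + α)) / 2))))
        = ENNReal.ofReal ((∑ j, x j ^ 2) ^ (α / 2)))
    (U V : Ω → (Fin k → ℝ)) (hU : Measurable U) (hV : Measurable V)
    (hUα : Integrable (fun ω => (∑ j, U ω j ^ 2) ^ (α / 2)) ℙ)
    (hVα : Integrable (fun ω => (∑ j, V ω j ^ 2) ^ (α / 2)) ℙ)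
    (hUVα : Integrable (fun ω => (∑ j, U ω j ^ 2) ^ (α / 2) * (∑ j, V ω j ^ 2) ^ (α / 2)) ℙ) :
    Integrable (fun ω : Ω × Ω =>
        (∑ j, (U ω.1 j - U ω.2 j) ^ 2) ^ (α / 2) *
          (∑ j, (V ω.1 j - V ω.2 j) ^ 2) ^ (α / 2)) (ℙ.prod ℙ) ∧
    Integrable (fun ω : Ω × Ω => (∑ j, (U ω.1 j - U ω.2 j) ^ 2) ^ (α / 2)) (ℙ.prod ℙ) ∧
    Integrable (fun ω : Ω × Ω => (∑ j, (V ω.1 j - V ω.2 j) ^ 2) ^ (α / 2)) (ℙ.prod ℙ) ∧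
    Integrable (fun ω : Ω × Ω × Ω =>
        (∑ j, (U ω.1 j - U ω.2.1 j) ^ 2) ^ (α / 2) *
          (∑ j, (V ω.1 j - V ω.2.2 j) ^ 2) ^ (α / 2)) (ℙ.prod (ℙ.prod ℙ)) ∧
    (∫⁻ (s : Fin k → ℝ), ∫⁻ (t : Fin k → ℝ),
        ENNReal.ofReal
          (‖(∫ ω, Complex.exp (Complex.I *
                ((∑ j, (s j * U ω j + t j * V ω j) : ℝ) : ℂ)) ∂ℙ) -
              (∫ ω, Complex.exp (Complex.I * ((∑ j, s j * U ω j : ℝ) : ℂ)) ∂ℙ) *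
              (∫ ω, Complex.exp (Complex.I * ((∑ j, t j * V ω j : ℝ) : ℂ)) ∂ℙ)‖ ^ 2 *
            ((c * (∑ j, s j ^ 2) ^ ((-((k : ℝ) + α)) / 2)) *
              (c * (∑ j, t j ^ 2) ^ ((-((k : ℝ) + α)) / 2)))))
      = ENNReal.ofReal
          ((∫ ω : Ω × Ω,
              (∑ j, (U ω.1 j - U ω.2 j) ^ 2) ^ (α / 2) *
                (∑ j, (V ω.1 j - V ω.2 j) ^ 2) ^ (α / 2) ∂(ℙ.prod ℙ))
            + (∫ ω : Ω × Ω, (∑ j, (U ω.1 j - U ω.2 j) ^ 2) ^ (α / 2) ∂(ℙ.prod ℙ)) *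
              (∫ ω : Ω × Ω, (∑ j, (V ω.1 j - V ω.2 j) ^ 2) ^ (α / 2) ∂(ℙ.prod ℙ))
            - 2 * ∫ ω : Ω × Ω × Ω,
                (∑ j, (U ω.1 j - U ω.2.1 j) ^ 2) ^ (α / 2) *
                  (∑ j, (V ω.1 j - V ω.2.2 j) ^ 2) ^ (α / 2) ∂(ℙ.prod (ℙ.prod ℙ))) := by
  have hα₀ : 0 ≤ α := hα.1.le
  have hUV₂ := integrable_euclidRpow_sub_mul_euclidRpow_sub_prod ℙ hα₀ hα₀ hU hV hUα hVα hUVα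
  have hU₂ := integrable_euclidRpow_sub_prod ℙ hα₀ hU hUα
  have hV₂ := integrable_euclidRpow_sub_prod ℙ hα₀ hV hVα
  have hUV₃ := integrable_euclidRpow_sub_mul_euclidRpow_sub_prod_prod ℙ hα₀ hα₀ hU hV hUα hVα hUVα
  refine ⟨hUV₂, hU₂, hV₂, hUV₃, ?_⟩
  have hg : IsLevyDensity (fun s : Fin k → ℝ => c * (∑ j, s j ^ 2) ^ ((-((k : ℝ) + α)) / 2))
      (euclidRpow α) :=
    ⟨by fun_prop, fun s => by positivity, hc_norm⟩
  simp only [Finset.sum_add_distrib]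
  exact lintegral_charFunDiffSq_mul_eq_ofReal ℙ hU hV hg hg (fun t => by simp)
    (euclidRpow_nonneg α) (euclidRpow_nonneg α) hUV₂ hU₂ hV₂ hUV₃

/-- For `α ∈ (0,2)` and the weight `g_k(s) = c_k |s|^{−k−α}` normalized
so that `∫ (1 − cos⟨s,x⟩) g_k(s) ds = |x|^α`, and random vectors `U, V : Ω → ℝ^k` with
finite `α`-moments (`E|U|^α, E|V|^α, E[|U|^α|V|^α] < ∞`), one has
`∫∫ |φ_{U,V}(s,t) − φ_U(s)φ_V(t)|² g_k(s)g_k(t) ds dt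
 = E[|U−U'|^α |V−V'|^α] + E[|U−U'|^α] E[|V−V'|^α] − 2 E[|U−U'|^α |V−V''|^α]`,
with all expectations on the right-hand side finite; here `(U',V')` is an independent
copy of `(U,V)` and `V''` an independent copy of `V`, realized by product coordinates,
and `|y|^α = (Σ_j y_j²)^{α/2}` is the `α`-th power of the Euclidean norm. -/
theorem distCovariance_alpha_representation
    {Ω : Type*} [MeasurableSpace Ω] (ℙ : Measure Ω) [IsProbabilityMeasure ℙ]
    {k : ℕ} (hk : 1 ≤ k) (α : ℝ) (hα : α ∈ Set.Ioo 0 2)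
    (c : ℝ) (hc : 0 < c)
    (hc_norm : ∀ x : Fin k → ℝ,
      (∫⁻ (s : Fin k → ℝ),
          ENNReal.ofReal
            ((1 - Real.cos (∑ j, s j * x j)) *
              (c * (∑ j, s j ^ 2) ^ ((-((k : ℝ) + α)) / 2))))
        = ENNReal.ofReal ((∑ j, x j ^ 2) ^ (α / 2)))
    (U V : Ω → (Fin k → ℝ)) (hU : Measurable U) (hV : Measurable V)
    (hUα : Integrable (fun ω => (∑ j, U ω j ^ 2) ^ (α / 2)) ℙ)
    (hVα : Integrable (fun ω => (∑ j, V ω j ^ 2) ^ (α / 2)) ℙ)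
    (hUVα : Integrable (fun ω => (∑ j, U ω j ^ 2) ^ (α / 2) * (∑ j, V ω j ^ 2) ^ (α / 2)) ℙ) :
    Integrable (fun ω : Ω × Ω =>
        (∑ j, (U ω.1 j - U ω.2 j) ^ 2) ^ (α / 2) *
          (∑ j, (V ω.1 j - V ω.2 j) ^ 2) ^ (α / 2)) (ℙ.prod ℙ) ∧
    Integrable (fun ω : Ω × Ω => (∑ j, (U ω.1 j - U ω.2 j) ^ 2) ^ (α / 2)) (ℙ.prod ℙ) ∧
    Integrable (fun ω : Ω × Ω => (∑ j, (V ω.1 j - V ω.2 j) ^ 2) ^ (α / 2)) (ℙ.prod ℙ) ∧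
    Integrable (fun ω : Ω × Ω × Ω =>
        (∑ j, (U ω.1 j - U ω.2.1 j) ^ 2) ^ (α / 2) *
          (∑ j, (V ω.1 j - V ω.2.2 j) ^ 2) ^ (α / 2)) (ℙ.prod (ℙ.prod ℙ)) ∧
    (∫⁻ (s : Fin k → ℝ), ∫⁻ (t : Fin k → ℝ),
        ENNReal.ofReal
          (‖(∫ ω, Complex.exp (Complex.I *
                ((∑ j, (s j * U ω j + t j * V ω j) : ℝ) : ℂ)) ∂ℙ) -
              (∫ ω, Complex.exp (Complex.I * ((∑ j, s j * U ω j : ℝ) : ℂ)) ∂ℙ) *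
              (∫ ω, Complex.exp (Complex.I * ((∑ j, t j * V ω j : ℝ) : ℂ)) ∂ℙ)‖ ^ 2 *
            ((c * (∑ j, s j ^ 2) ^ ((-((k : ℝ) + α)) / 2)) *
              (c * (∑ j, t j ^ 2) ^ ((-((k : ℝ) + α)) / 2)))))
      = ENNReal.ofReal
          ((∫ ω : Ω × Ω,
              (∑ j, (U ω.1 j - U ω.2 j) ^ 2) ^ (α / 2) *
                (∑ j, (V ω.1 j - V ω.2 j) ^ 2) ^ (α / 2) ∂(ℙ.prod ℙ))
            + (∫ ω : Ω × Ω, (∑ j, (U ω.1 j - U ω.2 j) ^ 2) ^ (α / 2) ∂(ℙ.prod ℙ)) *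
              (∫ ω : Ω × Ω, (∑ j, (V ω.1 j - V ω.2 j) ^ 2) ^ (α / 2) ∂(ℙ.prod ℙ))
            - 2 * ∫ ω : Ω × Ω × Ω,
                (∑ j, (U ω.1 j - U ω.2.1 j) ^ 2) ^ (α / 2) *
                  (∑ j, (V ω.1 j - V ω.2.2 j) ^ 2) ^ (α / 2) ∂(ℙ.prod (ℙ.prod ℙ))) :=
  distCovariance_alpha_representation_general ℙ α hα c hc hc_norm U V hU hV hUα hVα hUVα
end
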